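/- Let ψ₁, ψ₂ : ℂ → ℂ be smooth with ψ₂ nonvanishing, q = |ψ₁|² + |ψ₂|², H : ℂ → ℝ smooth and nonvanishing, and suppose ∂ψ₁ = Hqψ₂ and ∂̄ψ₂ = −Hqψ₁ (Dirac system with p = Hq). Set ρ = iψ̄₁/ψ₂. Then ρ satisfies the Gauss map equation H·(∂∂̄ρ − (2ρ̄/(1+|ρ|²))∂ρ∂̄ρ) = ∂H·∂̄ρ. -/

import Mathlib

open Complex ComplexConjugate

/-- Wirtinger derivative ∂ = (∂ₓ - i∂_y)/2. -/
noncomputable def wd (f : ℂ → ℂ) (z : ℂ) : ℂ :=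
  (fderiv ℝ f z 1 - Complex.I * fderiv ℝ f z Complex.I) / 2

/-- Wirtinger derivative ∂̄ = (∂ₓ + i∂_y)/2. -/
noncomputable def wdb (f : ℂ → ℂ) (z : ℂ) : ℂ :=
  (fderiv ℝ f z 1 + Complex.I * fderiv ℝ f z Complex.I) / 2

section Toolkit

variable {f g : ℂ → ℂ} {z : ℂ}

private lemma wd_congr (h : f =ᶠ[nhds z] g) : wd f z = wd g z := by
  unfold wd; rw [h.fderiv_eq]

private lemma wd_add (hf : DifferentiableAt ℝ f z) (hg : DifferentiableAt ℝ g z) :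
    wd (fun w => f w + g w) z = wd f z + wd g z := by
  unfold wd; rw [fderiv_fun_add hf hg]; simp; ring

private lemma wd_mul (hf : DifferentiableAt ℝ f z) (hg : DifferentiableAt ℝ g z) :
    wd (fun w => f w * g w) z = wd f z * g z + f z * wd g z := by
  unfold wd; rw [fderiv_fun_mul hf hg]; simp [smul_eq_mul]; ring

private lemma wdb_mul (hf : DifferentiableAt ℝ f z) (hg : DifferentiableAt ℝ g z) :
    wdb (fun w => f w * g w) z = wdb f z * g z + f z * wdb g z := by
  unfold wdb; rw [fderiv_fun_mul hf hg]; simp [smul_eq_mul]; ring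

private lemma wd_const_mul (hf : DifferentiableAt ℝ f z) (c : ℂ) :
    wd (fun w => c * f w) z = c * wd f z := by
  unfold wd; rw [fderiv_const_mul hf c]; simp [smul_eq_mul]; ring

private lemma wdb_const_mul (hf : DifferentiableAt ℝ f z) (c : ℂ) :
    wdb (fun w => c * f w) z = c * wdb f z := by
  unfold wdb; rw [fderiv_const_mul hf c]; simp [smul_eq_mul]; ring

private lemma fderiv_conj_comp (hf : DifferentiableAt ℝ f z) (v : ℂ) :
    fderiv ℝ (fun w => conj (f w)) z v = conj (fderiv ℝ f z v) := by
  have h := (Complex.conjCLE.toContinuousLinearMap.hasFDerivAt (x := f z)).comp z hf.hasFDerivAt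
  have h3 : fderiv ℝ (fun w => conj (f w)) z
      = (Complex.conjCLE.toContinuousLinearMap).comp (fderiv ℝ f z) := by
    have h2 : (fun w => conj (f w)) = (Complex.conjCLE.toContinuousLinearMap) ∘ f := by
      funext w; simp
    rw [h2]
    exact h.fderiv
  rw [h3]; simp

private lemma wd_conj (hf : DifferentiableAt ℝ f z) :
    wd (fun w => conj (f w)) z = conj (wdb f z) := by
  unfold wd wdb
  rw [fderiv_conj_comp hf, fderiv_conj_comp hf]
  rw [show ((2:ℂ)) = ((2:ℝ):ℂ) by norm_num]
  rw [map_div₀, map_add, map_mul, Complex.conj_I, Complex.conj_ofReal]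
  push_cast; ring

private lemma wdb_conj (hf : DifferentiableAt ℝ f z) :
    wdb (fun w => conj (f w)) z = conj (wd f z) := by
  unfold wd wdb
  rw [fderiv_conj_comp hf, fderiv_conj_comp hf]
  rw [show ((2:ℂ)) = ((2:ℝ):ℂ) by norm_num]
  rw [map_div₀, map_sub, map_mul, Complex.conj_I, Complex.conj_ofReal]
  push_cast; ring

private lemma wd_inv (hf : DifferentiableAt ℝ f z) (h0 : f z ≠ 0) :
    wd (fun w => (f w)⁻¹) z = -wd f z / (f z) ^ 2 := by
  have h1 : HasFDerivAt (fun x : ℂ => x⁻¹)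
      (((ContinuousLinearMap.smulRight (1 : ℂ →L[ℂ] ℂ) (-((f z) ^ 2)⁻¹)).restrictScalars ℝ)) (f z) :=
    ((hasDerivAt_inv h0).hasFDerivAt).restrictScalars ℝ
  have h2 := h1.comp z hf.hasFDerivAt
  have h3 : fderiv ℝ (fun w => (f w)⁻¹) z =
      ((ContinuousLinearMap.smulRight (1 : ℂ →L[ℂ] ℂ) (-((f z) ^ 2)⁻¹)).restrictScalars ℝ).comp
        (fderiv ℝ f z) := by
    have : (fun w => (f w)⁻¹) = (fun x : ℂ => x⁻¹) ∘ f := rfl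
    rw [this]; exact h2.fderiv
  unfold wd; rw [h3]; simp [smul_eq_mul]; ring

private lemma wdb_inv (hf : DifferentiableAt ℝ f z) (h0 : f z ≠ 0) :
    wdb (fun w => (f w)⁻¹) z = -wdb f z / (f z) ^ 2 := by
  have h1 : HasFDerivAt (fun x : ℂ => x⁻¹)
      (((ContinuousLinearMap.smulRight (1 : ℂ →L[ℂ] ℂ) (-((f z) ^ 2)⁻¹)).restrictScalars ℝ)) (f z) :=
    ((hasDerivAt_inv h0).hasFDerivAt).restrictScalars ℝ
  have h2 := h1.comp z hf.hasFDerivAt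
  have h3 : fderiv ℝ (fun w => (f w)⁻¹) z =
      ((ContinuousLinearMap.smulRight (1 : ℂ →L[ℂ] ℂ) (-((f z) ^ 2)⁻¹)).restrictScalars ℝ).comp
        (fderiv ℝ f z) := by
    have : (fun w => (f w)⁻¹) = (fun x : ℂ => x⁻¹) ∘ f := rfl
    rw [this]; exact h2.fderiv
  unfold wdb; rw [h3]; simp [smul_eq_mul]; ring

private lemma diff_conj (hf : DifferentiableAt ℝ f z) :
    DifferentiableAt ℝ (fun w => conj (f w)) z := by
  have h2 : (fun w => conj (f w)) = (Complex.conjCLE.toContinuousLinearMap) ∘ f := by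
    funext w; simp
  rw [h2]
  exact (Complex.conjCLE.toContinuousLinearMap.differentiableAt).comp z hf

private lemma diff_inv (hf : DifferentiableAt ℝ f z) (h0 : f z ≠ 0) :
    DifferentiableAt ℝ (fun w => (f w)⁻¹) z := by
  have h1 : HasFDerivAt (fun x : ℂ => x⁻¹)
      (((ContinuousLinearMap.smulRight (1 : ℂ →L[ℂ] ℂ) (-((f z) ^ 2)⁻¹)).restrictScalars ℝ)) (f z) :=
    ((hasDerivAt_inv h0).hasFDerivAt).restrictScalars ℝ
  have h2 := h1.comp z hf.hasFDerivAt
  exact h2.differentiableAt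

end Toolkit

set_option maxHeartbeats 4000000 in
theorem stmt_16 (ψ₁ ψ₂ : ℂ → ℂ) (Hf : ℂ → ℝ)
    (hψ₁ : ContDiff ℝ (⊤ : ℕ∞) ψ₁) (hψ₂ : ContDiff ℝ (⊤ : ℕ∞) ψ₂) (hHf : ContDiff ℝ (⊤ : ℕ∞) Hf)
    (U : Set ℂ) (hU : IsOpen U)
    (hψ₂0 : ∀ z ∈ U, ψ₂ z ≠ 0) (hH0 : ∀ z ∈ U, Hf z ≠ 0)
    (q : ℂ → ℝ) (hq : ∀ z, q z = ‖ψ₁ z‖ ^ 2 + ‖ψ₂ z‖ ^ 2)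
    (hD₁ : ∀ z, wd ψ₁ z = (Hf z : ℂ) * (q z : ℂ) * ψ₂ z)
    (hD₂ : ∀ z, wdb ψ₂ z = -((Hf z : ℂ) * (q z : ℂ)) * ψ₁ z)
    (ρ : ℂ → ℂ) (hρ : ∀ z, ρ z = Complex.I * conj (ψ₁ z) / ψ₂ z) :
    ∀ z ∈ U,
      (Hf z : ℂ) * (wd (fun w => wdb ρ w) z -
        (2 * conj (ρ z) / (1 + ‖ρ z‖ ^ 2)) * wd ρ z * wdb ρ z) =
      wd (fun w => (Hf w : ℂ)) z * wdb ρ z := by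
  intro z hz
  have hd₁ : Differentiable ℝ ψ₁ := hψ₁.differentiable (by simp)
  have hd₂ : Differentiable ℝ ψ₂ := hψ₂.differentiable (by simp)
  have hdH : Differentiable ℝ (fun w => ((Hf w : ℝ) : ℂ)) :=
    Complex.ofRealCLM.differentiable.comp (hHf.differentiable (by simp))
  set Q : ℂ → ℂ := fun w => ψ₁ w * conj (ψ₁ w) + ψ₂ w * conj (ψ₂ w) with hQdef
  have hdQ : Differentiable ℝ Q := fun w =>
    (((hd₁ w).mul (diff_conj (hd₁ w))).add ((hd₂ w).mul (diff_conj (hd₂ w))))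
  have hqQ : ∀ w, ((q w : ℝ) : ℂ) = Q w := by
    intro w
    simp only [hQdef, hq, Complex.mul_conj, Complex.normSq_eq_norm_sq]
    push_cast
    ring
  have hρfun : ρ = fun w => Complex.I * (conj (ψ₁ w) * (ψ₂ w)⁻¹) := by
    funext w; rw [hρ w]; ring
  -- the value of wdb ρ on U
  have hg : ∀ w ∈ U, wdb ρ w =
      Complex.I * ((fun u => ((Hf u : ℝ) : ℂ)) w * (Q w * Q w * (ψ₂ w * ψ₂ w)⁻¹)) := by
    intro w hw
    have h2 : ψ₂ w ≠ 0 := hψ₂0 w hw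
    rw [hρfun]
    rw [wdb_const_mul (f := fun w => conj (ψ₁ w) * (ψ₂ w)⁻¹) ((diff_conj (hd₁ w)).mul (diff_inv (hd₂ w) h2)) Complex.I]
    rw [wdb_mul (diff_conj (hd₁ w)) (diff_inv (hd₂ w) h2)]
    rw [wdb_conj (hd₁ w), wdb_inv (hd₂ w) h2, hD₁ w, hD₂ w]
    rw [map_mul, map_mul, Complex.conj_ofReal, Complex.conj_ofReal]
    rw [hqQ w]
    simp only [hQdef]
    field_simp
    ring
  have hzU := hU.mem_nhds hz
  have h2 : ψ₂ z ≠ 0 := hψ₂0 z hz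
  have hd2 : conj (ψ₂ z) ≠ 0 := by simpa using h2
  have hq0 : q z ≠ 0 := by
    rw [hq z]
    have : ‖ψ₂ z‖ ≠ 0 := by simpa using h2
    positivity
  have hQ0 : Q z ≠ 0 := by rw [← hqQ z]; exact_mod_cast hq0
  -- second derivative
  have hwd2 : wd (fun w => wdb ρ w) z =
      wd (fun w => Complex.I * ((fun u => ((Hf u : ℝ) : ℂ)) w * (Q w * Q w * (ψ₂ w * ψ₂ w)⁻¹))) z := by
    apply wd_congr
    filter_upwards [hzU] with w hw using hg w hw
  have hpp0 : ψ₂ z * ψ₂ z ≠ 0 := mul_ne_zero h2 h2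
  have hdpp : DifferentiableAt ℝ (fun w => ψ₂ w * ψ₂ w) z := (hd₂ z).mul (hd₂ z)
  have hdippz : DifferentiableAt ℝ (fun w => (ψ₂ w * ψ₂ w)⁻¹) z := diff_inv hdpp hpp0
  have hdQQ : DifferentiableAt ℝ (fun w => Q w * Q w) z := (hdQ z).mul (hdQ z)
  have hdE : DifferentiableAt ℝ (fun w => Q w * Q w * (ψ₂ w * ψ₂ w)⁻¹) z := hdQQ.mul hdippz
  have hwd2' : wd (fun w => wdb ρ w) z =
      Complex.I * (wd (fun w => ((Hf w : ℝ) : ℂ)) z * (Q z * Q z * (ψ₂ z * ψ₂ z)⁻¹) +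
        ((Hf z : ℝ) : ℂ) * ((wd Q z * Q z + Q z * wd Q z) * (ψ₂ z * ψ₂ z)⁻¹ +
          Q z * Q z * (-(wd ψ₂ z * ψ₂ z + ψ₂ z * wd ψ₂ z) / (ψ₂ z * ψ₂ z) ^ 2))) := by
    rw [hwd2]
    rw [wd_const_mul (f := fun w => ((Hf w : ℝ) : ℂ) * (Q w * Q w * (ψ₂ w * ψ₂ w)⁻¹)) ((hdH z).mul hdE) Complex.I]
    rw [wd_mul (hdH z) hdE]
    rw [wd_mul hdQQ hdippz]
    rw [wd_mul (hdQ z) (hdQ z)]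
    rw [wd_inv hdpp hpp0]
    rw [wd_mul (hd₂ z) (hd₂ z)]
  -- first derivatives of ρ
  have hwdρ : wd ρ z =
      Complex.I * (conj (wdb ψ₁ z) * (ψ₂ z)⁻¹ + conj (ψ₁ z) * (-wd ψ₂ z / (ψ₂ z) ^ 2)) := by
    rw [hρfun]
    rw [wd_const_mul (f := fun w => conj (ψ₁ w) * (ψ₂ w)⁻¹) ((diff_conj (hd₁ z)).mul (diff_inv (hd₂ z) h2)) Complex.I]
    rw [wd_mul (diff_conj (hd₁ z)) (diff_inv (hd₂ z) h2)]
    rw [wd_conj (hd₁ z), wd_inv (hd₂ z) h2]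
  have hwdbρ := hg z hz
  -- derivative of Q
  have hwdQ : wd Q z = (Hf z : ℂ) * (q z : ℂ) * ψ₂ z * conj (ψ₁ z) + ψ₁ z * conj (wdb ψ₁ z)
      + wd ψ₂ z * conj (ψ₂ z) + ψ₂ z * (-((Hf z : ℂ) * (q z : ℂ)) * conj (ψ₁ z)) := by
    simp only [hQdef]
    rw [wd_add (f := fun w => ψ₁ w * conj (ψ₁ w)) (g := fun w => ψ₂ w * conj (ψ₂ w)) ((hd₁ z).mul (diff_conj (hd₁ z))) ((hd₂ z).mul (diff_conj (hd₂ z)))]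
    rw [wd_mul (hd₁ z) (diff_conj (hd₁ z)), wd_mul (hd₂ z) (diff_conj (hd₂ z))]
    rw [wd_conj (hd₁ z), wd_conj (hd₂ z), hD₁ z, hD₂ z]
    simp only [map_neg, map_mul, Complex.conj_ofReal]
    ring
  -- conjugate and modulus of ρ
  have hconjρ : conj (ρ z) = -Complex.I * ψ₁ z / conj (ψ₂ z) := by
    rw [hρ z, map_div₀, map_mul, Complex.conj_I, Complex.conj_conj]
  have habs : ((‖ρ z‖ : ℝ) : ℂ) ^ 2 = ρ z * conj (ρ z) := by
    rw [Complex.mul_conj, Complex.normSq_eq_norm_sq]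
    push_cast
    ring
  have hfrac : (1 : ℂ) + ((‖ρ z‖ : ℝ) : ℂ) ^ 2 =
      (ψ₁ z * conj (ψ₁ z) + ψ₂ z * conj (ψ₂ z)) / (ψ₂ z * conj (ψ₂ z)) := by
    rw [habs, hρ z, map_div₀, map_mul, Complex.conj_I, Complex.conj_conj]
    field_simp
    ring_nf
    simp only [Complex.I_sq]
    ring
  have hsum0 : ψ₁ z * conj (ψ₁ z) + ψ₂ z * conj (ψ₂ z) ≠ 0 := by
    have := hQ0; simpa [hQdef] using this
  have hcoef : 2 * conj (ρ z) / (1 + ((‖ρ z‖ : ℝ) : ℂ) ^ 2) =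
      -2 * Complex.I * ψ₁ z * ψ₂ z / (ψ₁ z * conj (ψ₁ z) + ψ₂ z * conj (ψ₂ z)) := by
    rw [hconjρ, hfrac, div_div_eq_mul_div]
    field_simp
  -- put everything together
  rw [hwd2', hwdρ, hwdbρ, hwdQ, hcoef]
  rw [hqQ z]
  simp only [hQdef]
  have hI2 : (Complex.I : ℂ) ^ 2 = -1 := Complex.I_sq
  have hI3 : (Complex.I : ℂ) ^ 3 = -Complex.I := by rw [pow_succ, hI2]; ring
  have hI4 : (Complex.I : ℂ) ^ 4 = 1 := by rw [pow_succ, hI3]; simp [Complex.I_mul_I]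
  field_simp [h2, hd2, hsum0]
  ring_nf
  simp only [hI2, hI3, hI4]
  ring
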